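/- Let V_1, ..., V_j be distinct coordinates of I and let D ⊆ I be disjoint from {V_1, ..., V_j}. For each i ∈ {1, ..., j} let C_i ⊆ {V_{i+1}, ..., V_j} ∪ D. If for every assignment ω ∈ Ω one has ∏_{i=1}^j P(V_i = ω_{V_i} | C_i = ω|_{C_i}) = P({V_1, ..., V_j} = ω | D = ω|_D), then for every i ∈ {1, ..., j} and every assignment ω ∈ Ω one has P(V_i = ω_{V_i} | C_i = ω|_{C_i}) = P(V_i = ω_{V_i} | ({V_{i+1}, ..., V_j} ∪ D) = ω|_{{V_{i+1},...,V_j} ∪ D}); in particular each factor of the product is the chain-rule conditional of V_i given all later variables and D. -/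
import Mathlib


open Finset

/-- Marginal probability `P(S = ω|_S)` of a strictly positive pmf `P` on a finite
product: the sum of `P ω'` over all assignments `ω'` agreeing with `ω` on `S`. -/
noncomputable def marg {I : Type} [Fintype I] [DecidableEq I] {F : I → Type}
    [∀ i, Fintype (F i)] [∀ i, DecidableEq (F i)]
    (P : (∀ i, F i) → ℝ) (S : Finset I) (ω : ∀ i, F i) : ℝ :=
  ∑ ω' : ∀ i, F i, if ∀ i ∈ S, ω' i = ω i then P ω' else 0

/-- Elementary conditional probability `P(T = ω|_T | S = ω|_S)`. -/
noncomputable def condP {I : Type} [Fintype I] [DecidableEq I] {F : I → Type}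
    [∀ i, Fintype (F i)] [∀ i, DecidableEq (F i)]
    (P : (∀ i, F i) → ℝ) (T S : Finset I) (ω : ∀ i, F i) : ℝ :=
  marg P (S ∪ T) ω / marg P S ω

/-- Conditional independence of coordinates `a` and `b` given the set `S`. -/
def condIndep {I : Type} [Fintype I] [DecidableEq I] {F : I → Type}
    [∀ i, Fintype (F i)] [∀ i, DecidableEq (F i)]
    (P : (∀ i, F i) → ℝ) (a b : I) (S : Finset I) : Prop :=
  ∀ ω, condP P {a, b} S ω = condP P {a} S ω * condP P {b} S ω


section aux
variable {I : Type} [Fintype I] [DecidableEq I] {F : I → Type}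
    [∀ i, Fintype (F i)] [∀ i, DecidableEq (F i)]
    (P : (∀ i, F i) → ℝ)

lemma marg_congr (S : Finset I) {ω ω' : ∀ i, F i}
    (h : ∀ i ∈ S, ω i = ω' i) : marg P S ω = marg P S ω' := by
  unfold marg
  refine Finset.sum_congr rfl fun x _ => ?_
  have : (∀ i ∈ S, x i = ω i) ↔ (∀ i ∈ S, x i = ω' i) :=
    forall₂_congr fun i hi => by rw [h i hi]
  rw [if_congr this rfl rfl]

lemma marg_pos (hpos : ∀ ω, 0 < P ω) (S : Finset I) (ω : ∀ i, F i) :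
    0 < marg P S ω := by
  unfold marg
  apply Finset.sum_pos'
  · intro x _
    split
    · exact le_of_lt (hpos x)
    · exact le_rfl
  · exact ⟨ω, mem_univ ω, by simp [hpos ω]⟩

lemma marg_update (S : Finset I) {a : I} (ha : a ∉ S) (ω : ∀ i, F i) (v : F a) :
    marg P S (Function.update ω a v) = marg P S ω := by
  refine marg_congr P S fun i hi => ?_
  rw [Function.update_of_ne (by rintro rfl; exact ha hi)]

lemma marg_sum_update (S : Finset I) {a : I} (ha : a ∉ S) (ω : ∀ i, F i) :
    ∑ v : F a, marg P (insert a S) (Function.update ω a v) = marg P S ω := by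
  unfold marg
  rw [Finset.sum_comm]
  refine Finset.sum_congr rfl fun x _ => ?_
  by_cases hQ : ∀ i ∈ S, x i = ω i
  · rw [if_pos hQ]
    have heq : ∀ v : F a,
        (if ∀ i ∈ insert a S, x i = Function.update ω a v i then P x else 0)
        = if x a = v then P x else 0 := by
      intro v
      have : (∀ i ∈ insert a S, x i = Function.update ω a v i) ↔ x a = v := by
        constructor
        · intro h; have := h a (mem_insert_self a S); simpa using this
        · intro hv i hi
          rcases mem_insert.mp hi with rfl | hmem
          · simpa using hv
          · rw [Function.update_of_ne (by rintro rfl; exact ha hmem)]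
            exact hQ i hmem
      rw [if_congr this rfl rfl]
    rw [Finset.sum_congr rfl fun v _ => heq v]
    simp [Finset.sum_ite_eq]
  · rw [if_neg hQ]
    refine Finset.sum_eq_zero fun v _ => ?_
    rw [if_neg]
    intro hall
    exact hQ fun i hi => by
      have := hall i (mem_insert_of_mem hi)
      rwa [Function.update_of_ne (by rintro rfl; exact ha hi)] at this

lemma condP_update (T S : Finset I) {a : I} (haS : a ∉ S) (haT : a ∉ T)
    (ω : ∀ i, F i) (v : F a) :
    condP P T S (Function.update ω a v) = condP P T S ω := by
  unfold condP
  rw [marg_update P _ (by simp [haS, haT]) , marg_update P _ haS]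

lemma sum_condP_single (hpos : ∀ ω, 0 < P ω) (S : Finset I) {a : I} (ha : a ∉ S)
    (ω : ∀ i, F i) :
    ∑ v : F a, condP P {a} S (Function.update ω a v) = 1 := by
  unfold condP
  have hins : S ∪ {a} = insert a S := by rw [Finset.union_comm, ← Finset.insert_eq]
  have : ∀ v : F a, marg P S (Function.update ω a v) = marg P S ω :=
    fun v => marg_update P S ha ω v
  calc ∑ v : F a, marg P (S ∪ {a}) (Function.update ω a v) / marg P S (Function.update ω a v)
      = (∑ v : F a, marg P (insert a S) (Function.update ω a v)) / marg P S ω := by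
        rw [Finset.sum_div]
        exact Finset.sum_congr rfl fun v _ => by rw [this v, hins]
    _ = 1 := by rw [marg_sum_update P S ha ω]; exact div_self (ne_of_gt (marg_pos P hpos S ω))

end aux
theorem chain_rule_conditionals {I : Type} [Fintype I] [DecidableEq I] {F : I → Type}
    [∀ i, Fintype (F i)] [∀ i, DecidableEq (F i)] [∀ i, Nonempty (F i)]
    (P : (∀ i, F i) → ℝ) (hpos : ∀ ω, 0 < P ω) (hsum : ∑ ω, P ω = 1)
    {j : ℕ} (V : Fin j → I) (hV : Function.Injective V)
    (D : Finset I) (hD : ∀ i, V i ∉ D)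
    (C : Fin j → Finset I)
    (hC : ∀ i : Fin j, C i ⊆ (univ.filter (fun i' => i < i')).image V ∪ D)
    (h : ∀ ω, (∏ i, condP P {V i} (C i) ω) = condP P (univ.image V) D ω) :
    ∀ i : Fin j, ∀ ω,
      condP P {V i} (C i) ω =
        condP P {V i} ((univ.filter (fun i' => i < i')).image V ∪ D) ω := by
  classical
  have hVC : ∀ i : Fin j, V i ∉ C i := by
    intro i hmem
    rcases mem_union.mp (hC i hmem) with hm | hm
    · rcases mem_image.mp hm with ⟨i', hi', he⟩
      have h2 : i' = i := hV he
      have h3 : i < i' := (mem_filter.mp hi').2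
      rw [h2] at h3
      exact lt_irrefl i h3
    · exact hD i hm
  have hVnotC : ∀ i i' : Fin j, i < i' → V i ∉ C i' := by
    intro i i' hlt hmem
    rcases mem_union.mp (hC i' hmem) with hm | hm
    · rcases mem_image.mp hm with ⟨i'', hi'', he⟩
      have h2 : i'' = i := hV he
      have h3 : i' < i'' := (mem_filter.mp hi'').2
      rw [h2] at h3
      exact lt_irrefl i (lt_trans hlt h3)
    · exact hD i hm
  have key : ∀ k : ℕ, ∀ ω,
      (∏ i ∈ univ.filter (fun i : Fin j => k ≤ i.val), condP P {V i} (C i) ω)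
        = marg P (D ∪ (univ.filter (fun i : Fin j => k ≤ i.val)).image V) ω
            / marg P D ω := by
    intro k
    induction k with
    | zero =>
      intro ω
      have h0 : (univ.filter fun i : Fin j => 0 ≤ i.val) = univ := by simp
      rw [h0]
      simpa [condP] using h ω
    | succ k IH =>
      by_cases hk : k < j
      · set K : Fin j := ⟨k, hk⟩ with hK
        have hsplit : (univ.filter fun i : Fin j => k ≤ i.val)
            = insert K (univ.filter fun i : Fin j => k + 1 ≤ i.val) := by
          ext i
          simp only [mem_insert, mem_filter, mem_univ, true_and, Fin.ext_iff, hK]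
          omega
        have hKnot : K ∉ (univ.filter fun i : Fin j => k + 1 ≤ i.val) := by
          simp [hK]
        have hVKnot : V K ∉ D ∪ (univ.filter fun i : Fin j => k + 1 ≤ i.val).image V := by
          simp only [mem_union, mem_image, mem_filter, mem_univ, true_and]
          rintro (hm | ⟨i', hi', he⟩)
          · exact hD K hm
          · have h2 : i' = K := hV he
            rw [h2] at hi'
            simp [hK] at hi'
        intro ω
        have hL : ∀ v : F (V K),
            (∏ i ∈ univ.filter (fun i : Fin j => k ≤ i.val),
              condP P {V i} (C i) (Function.update ω (V K) v))
            = condP P {V K} (C K) (Function.update ω (V K) v) *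
              ∏ i ∈ univ.filter (fun i : Fin j => k + 1 ≤ i.val),
                condP P {V i} (C i) ω := by
          intro v
          rw [hsplit, Finset.prod_insert hKnot]
          congr 1
          refine Finset.prod_congr rfl fun i hi => ?_
          have hi' : k + 1 ≤ i.val := (mem_filter.mp hi).2
          have hKlt : K < i := by
            rw [Fin.lt_def]; simpa [hK] using hi'
          refine condP_update P {V i} (C i) (hVnotC K i hKlt) ?_ ω v
          simp only [mem_singleton]
          intro hVe
          exact absurd (hV hVe) (ne_of_lt hKlt)
        have hsum1 : ∑ v : F (V K),
            (∏ i ∈ univ.filter (fun i : Fin j => k ≤ i.val),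
              condP P {V i} (C i) (Function.update ω (V K) v))
            = ∏ i ∈ univ.filter (fun i : Fin j => k + 1 ≤ i.val),
                condP P {V i} (C i) ω := by
          rw [Finset.sum_congr rfl (fun v _ => hL v), ← Finset.sum_mul,
            sum_condP_single P hpos (C K) (hVC K) ω, one_mul]
        have hDins : D ∪ (univ.filter fun i : Fin j => k ≤ i.val).image V
            = insert (V K) (D ∪ (univ.filter fun i : Fin j => k + 1 ≤ i.val).image V) := by
          rw [hsplit, Finset.image_insert, Finset.union_insert]
        have hsum2 : ∑ v : F (V K),
            (marg P (D ∪ (univ.filter fun i : Fin j => k ≤ i.val).image V)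
                (Function.update ω (V K) v)
              / marg P D (Function.update ω (V K) v))
            = marg P (D ∪ (univ.filter fun i : Fin j => k + 1 ≤ i.val).image V) ω
                / marg P D ω := by
          have : ∀ v : F (V K),
              (marg P (D ∪ (univ.filter fun i : Fin j => k ≤ i.val).image V)
                  (Function.update ω (V K) v)
                / marg P D (Function.update ω (V K) v))
              = marg P (insert (V K)
                  (D ∪ (univ.filter fun i : Fin j => k + 1 ≤ i.val).image V))
                  (Function.update ω (V K) v) / marg P D ω := by
            intro v
            rw [hDins, marg_update P D (hD K) ω v]
          rw [Finset.sum_congr rfl (fun v _ => this v), ← Finset.sum_div,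
            marg_sum_update P _ hVKnot ω]
        rw [← hsum1, Finset.sum_congr rfl (fun v _ => IH (Function.update ω (V K) v)), hsum2]
      · intro ω
        have he : (univ.filter fun i : Fin j => k + 1 ≤ i.val) = ∅ := by
          ext i
          simp only [mem_filter, mem_univ, true_and, notMem_empty, iff_false]
          have := i.isLt
          omega
        rw [he, Finset.prod_empty, Finset.image_empty, Finset.union_empty,
          div_self (ne_of_gt (marg_pos P hpos D ω))]
  intro i ω
  have hk := key i.val ω
  have hk1 := key (i.val + 1) ω
  have hsplit : (univ.filter fun i' : Fin j => i.val ≤ i'.val)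
      = insert i (univ.filter fun i' : Fin j => i.val + 1 ≤ i'.val) := by
    ext i'
    simp only [mem_insert, mem_filter, mem_univ, true_and, Fin.ext_iff]
    omega
  have hinot : i ∉ (univ.filter fun i' : Fin j => i.val + 1 ≤ i'.val) := by simp
  have hfilt : (univ.filter fun i' : Fin j => i < i')
      = (univ.filter fun i' : Fin j => i.val + 1 ≤ i'.val) := by
    ext i'
    simp only [mem_filter, mem_univ, true_and, Fin.lt_def]
    omega
  set S' : Finset I := (univ.filter fun i' : Fin j => i.val + 1 ≤ i'.val).image V with hS'
  rw [hsplit, Finset.prod_insert hinot, hk1, Finset.image_insert,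
    Finset.union_insert] at hk
  -- hk : condP P {V i} (C i) ω * (marg P (D ∪ S') ω / marg P D ω)
  --        = marg P (insert (V i) (D ∪ S')) ω / marg P D ω
  have hBne : marg P (D ∪ S') ω ≠ 0 := ne_of_gt (marg_pos P hpos _ ω)
  have hDne : marg P D ω ≠ 0 := ne_of_gt (marg_pos P hpos D ω)
  have hk' : condP P {V i} (C i) ω * marg P (D ∪ S') ω
      = marg P (insert (V i) (D ∪ S')) ω := by
    field_simp at hk
    linarith
  have e1 : ((univ.filter fun i' : Fin j => i < i').image V ∪ D) ∪ {V i}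
      = insert (V i) (D ∪ S') := by
    rw [hfilt, ← hS', Finset.union_comm S' D, Finset.union_comm _ {V i},
      ← Finset.insert_eq]
  have e2 : (univ.filter fun i' : Fin j => i < i').image V ∪ D = D ∪ S' := by
    rw [hfilt, ← hS', Finset.union_comm]
  show condP P {V i} (C i) ω
      = condP P {V i} ((univ.filter fun i' : Fin j => i < i').image V ∪ D) ω
  unfold condP
  rw [e1, e2]
  rw [eq_div_iff hBne]
  exact hk'
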